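/- In the classical board game where the player sends a bit b, loses with certainty if b = 0, and wins with probability 1/2 if b = 1, the maximal probability of winning exactly one of two games is 3/4 when the games are played sequentially (with knowledge of the first outcome), but only 1/2 when played in parallel (player commits b_1, b_2 in advance, possibly randomized). -/
import Mathlib


noncomputable section

/-- winning probability in a single board game when the player sends bit `b`:
losing with certainty on `b = 0` (false), winning with probability 1/2 on
`b = 1` (true) -/
def wp (b : Bool) : ℝ := if b then 1/2 else 0

/-- probability of winning exactly one of two independent games given the bits
sent in each -/
def exactlyOne (b₁ b₂ : Bool) : ℝ := wp b₁ * (1 - wp b₂) + (1 - wp b₁) * wp b₂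

/-- value of a deterministic sequential strategy: first bit `b₁`, then the bit
`g o` sent in the second game where `o` is whether the first game was won -/
def seqVal (s : Bool × (Bool → Bool)) : ℝ :=
  wp s.1 * (1 - wp (s.2 true)) + (1 - wp s.1) * wp (s.2 false)

lemma seqVal_le (s : Bool × (Bool → Bool)) : seqVal s ≤ 3/4 := by
  obtain ⟨b, g⟩ := s
  rcases Bool.dichotomy (g true) with h | h <;> rcases Bool.dichotomy (g false) with h' | h' <;>
    cases b <;> simp [seqVal, wp, h, h'] <;> norm_num

lemma exactlyOne_le (b₁ b₂ : Bool) : exactlyOne b₁ b₂ ≤ 1/2 := by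
  simp only [exactlyOne, wp]
  cases b₁ <;> cases b₂ <;> norm_num

lemma sum_dirac {α : Type*} [Fintype α] [DecidableEq α] (a : α) (f : α → ℝ) :
    (∑ x, (if x = a then (1:ℝ) else 0) * f x) = f a := by
  rw [Finset.sum_eq_single a]
  · simp
  · intro b _ hb; simp [hb]
  · simp

theorem sequential_beats_parallel :
    IsGreatest {r : ℝ | ∃ w : Bool × (Bool → Bool) → ℝ,
        (∀ s, 0 ≤ w s) ∧ (∑ s, w s) = 1 ∧ r = ∑ s, w s * seqVal s}
      (3/4) ∧
    IsGreatest {r : ℝ | ∃ w : Bool × Bool → ℝ,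
        (∀ b, 0 ≤ w b) ∧ (∑ b, w b) = 1 ∧ r = ∑ b, w b * exactlyOne b.1 b.2}
      (1/2) := by
  constructor
  · constructor
    · refine ⟨fun s => if s = (true, fun o => !o) then 1 else 0, ?_, ?_, ?_⟩
      · intro s; positivity
      · simp
      · rw [sum_dirac]
        simp [seqVal, wp]
        norm_num
    · rintro r ⟨w, hw0, hw1, rfl⟩
      calc ∑ s, w s * seqVal s ≤ ∑ s, w s * (3/4) :=
            Finset.sum_le_sum fun s _ => mul_le_mul_of_nonneg_left (seqVal_le s) (hw0 s)
        _ = 3/4 := by rw [← Finset.sum_mul, hw1, one_mul]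
  · constructor
    · refine ⟨fun b => if b = (true, true) then 1 else 0, ?_, ?_, ?_⟩
      · intro s; positivity
      · simp
      · rw [sum_dirac]
        simp [exactlyOne, wp]
        norm_num
    · rintro r ⟨w, hw0, hw1, rfl⟩
      calc ∑ b, w b * exactlyOne b.1 b.2 ≤ ∑ b, w b * (1/2) :=
            Finset.sum_le_sum fun b _ => mul_le_mul_of_nonneg_left (exactlyOne_le b.1 b.2) (hw0 b)
        _ = 1/2 := by rw [← Finset.sum_mul, hw1, one_mul]
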